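/- arXiv:1809.03696 — 6 statements merged into one kernel-verified Lean document; each statement's English description precedes it below -/
import Mathlib

section
/- Let Γ be a finite simple graph on n vertices that is strongly regular with parameters (n, k, λ, μ) where 0 < k < n − 1, and let A be its adjacency matrix over ℝ. Then: (i) every real number ρ admitting an eigenvector v of A (A v = ρ • v, v ≠ 0) whose coordinates sum to zero satisfies ρ² + (μ − λ) ρ + (μ − k) = 0; (ii) the quadratic x² + (μ − λ) x + (μ − k) has two distinct real roots r > s, with s ≤ 0 ≤ r ≤ k. -/
open Matrix

/-- For a strongly regular graph with parameters `(n, k, λ, μ)`, `0 < k < n − 1`: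
(i) every restricted eigenvalue `ρ` (one with a nonzero sum-zero eigenvector)
satisfies `ρ² + (μ − λ) ρ + (μ − k) = 0`;
(ii) the quadratic `x² + (μ − λ) x + (μ − k)` has two distinct real roots `r > s`
with `s ≤ 0 ≤ r ≤ k`. -/
theorem stmt_6 {V : Type*} [Fintype V] [DecidableEq V]
    (Γ : SimpleGraph V) [DecidableRel Γ.Adj]
    (n k l m : ℕ) (h : Γ.IsSRGWith n k l m) (hk0 : 0 < k) (hkn : k + 1 < n) :
    (∀ (ρ : ℝ) (v : V → ℝ), v ≠ 0 → (∑ i, v i = 0) →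
        Γ.adjMatrix ℝ *ᵥ v = ρ • v →
        ρ ^ 2 + ((m : ℝ) - l) * ρ + ((m : ℝ) - k) = 0) ∧
    ∃ r s : ℝ, s < r ∧ s ≤ 0 ∧ 0 ≤ r ∧ r ≤ k ∧
      ∀ x : ℝ, x ^ 2 + ((m : ℝ) - l) * x + ((m : ℝ) - k) = 0 ↔ (x = r ∨ x = s) := by
  -- the complement adjacency matrix as J - I - A
  have hcompl : Γᶜ.adjMatrix ℝ = Matrix.of (fun _ _ => (1 : ℝ)) - 1 - Γ.adjMatrix ℝ := by
    ext i j
    by_cases hij : i = j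
    · subst hij; simp [Matrix.one_apply]
    · by_cases ha : Γ.Adj i j
      · simp [Matrix.one_apply, hij, ha, SimpleGraph.compl_adj]
      · simp [Matrix.one_apply, hij, ha, SimpleGraph.compl_adj]
  constructor
  · intro ρ v hv hsum hev
    have hmat := h.matrix_eq (α := ℝ)
    -- apply the matrix identity to v
    have h2 : (Γ.adjMatrix ℝ ^ 2) *ᵥ v = (ρ ^ 2) • v := by
      rw [pow_two, ← Matrix.mulVec_mulVec, hev, Matrix.mulVec_smul, hev, smul_smul, pow_two]
    have hJ : (Matrix.of (fun (_ _ : V) => (1 : ℝ))) *ᵥ v = 0 := by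
      ext i
      simp [Matrix.mulVec, dotProduct, hsum]
    have hR : (Γ.adjMatrix ℝ ^ 2) *ᵥ v
        = (k : ℝ) • v + (l : ℝ) • (ρ • v) + (m : ℝ) • (-v - ρ • v) := by
      rw [hmat, hcompl]
      have : ∀ (c : ℕ) (M : Matrix V V ℝ), c • M = (c : ℝ) • M := fun c M => by
        simp [Nat.cast_smul_eq_nsmul]
      rw [Matrix.add_mulVec, Matrix.add_mulVec, this k, this l, this m,
        Matrix.smul_mulVec, Matrix.smul_mulVec, Matrix.smul_mulVec,
        Matrix.one_mulVec, Matrix.sub_mulVec, Matrix.sub_mulVec, Matrix.one_mulVec, hJ, hev]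
      simp [sub_eq_add_neg]
    obtain ⟨i, hi⟩ : ∃ i, v i ≠ 0 := by
      by_contra hc
      push_neg at hc
      exact hv (funext hc)
    have := congrFun (h2.symm.trans hR) i
    simp only [Pi.smul_apply, Pi.add_apply, Pi.sub_apply, Pi.neg_apply, smul_eq_mul] at this
    have hz : (ρ ^ 2 + ((m : ℝ) - l) * ρ + ((m : ℝ) - k)) * v i = 0 := by ring_nf; linarith [this]
    rcases mul_eq_zero.mp hz with h' | h'
    · exact h'
    · exact absurd h' hi
  · -- part (ii)
    have hV : Fintype.card V = n := h.card
    have hne : Nonempty V := by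
      rw [← Fintype.card_pos_iff, hV]; omega
    obtain ⟨v₀⟩ := hne
    -- an edge exists
    obtain ⟨w₀, hw₀⟩ : ∃ w, Γ.Adj v₀ w := by
      have hd : Γ.degree v₀ = k := h.regular v₀
      have : 0 < Γ.degree v₀ := by omega
      rw [← SimpleGraph.card_neighborFinset_eq_degree, Finset.card_pos] at this
      obtain ⟨w, hw⟩ := this
      exact ⟨w, (SimpleGraph.mem_neighborFinset _ _ _).mp hw⟩
    -- a nonadjacent distinct pair exists
    obtain ⟨u₀, hu₀ne, hu₀⟩ : ∃ u, u ≠ v₀ ∧ ¬Γ.Adj v₀ u := by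
      by_contra hc
      push_neg at hc
      have hsub : Finset.univ ⊆ insert v₀ (Γ.neighborFinset v₀) := by
        intro u _
        by_cases hu : u = v₀
        · simp [hu]
        · exact Finset.mem_insert_of_mem
            ((SimpleGraph.mem_neighborFinset _ _ _).mpr (hc u hu))
      have := Finset.card_le_card hsub
      rw [Finset.card_univ, hV] at this
      have hcard : (insert v₀ (Γ.neighborFinset v₀)).card ≤ k + 1 := by
        calc (insert v₀ (Γ.neighborFinset v₀)).card ≤ (Γ.neighborFinset v₀).card + 1 :=
              Finset.card_insert_le _ _
          _ = k + 1 := by rw [SimpleGraph.card_neighborFinset_eq_degree, h.regular v₀]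
      omega
    have hl : l < k := by
      have := hw₀.card_commonNeighbors_lt_degree
      rwa [h.of_adj v₀ w₀ hw₀, h.regular v₀] at this
    have hm : m ≤ k := by
      have := Γ.card_commonNeighbors_le_degree_left v₀ u₀
      rwa [h.of_not_adj hu₀ne.symm hu₀, h.regular v₀] at this
    have hlr : (l : ℝ) + 1 ≤ k := by exact_mod_cast hl
    have hmr : (m : ℝ) ≤ k := by exact_mod_cast hm
    have hm0 : (0 : ℝ) ≤ m := Nat.cast_nonneg m
    have hk1 : (1 : ℝ) ≤ k := by exact_mod_cast hk0
    set D : ℝ := ((l : ℝ) - m) ^ 2 + 4 * ((k : ℝ) - m) with hD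
    have hD0 : 0 < D := by
      rcases eq_or_lt_of_le hmr with he | hlt
      · nlinarith [hlr, he]
      · nlinarith [sq_nonneg ((l : ℝ) - m)]
    have hsqrt_pos : 0 < Real.sqrt D := Real.sqrt_pos.mpr hD0
    have hsq : Real.sqrt D ^ 2 = D := Real.sq_sqrt hD0.le
    refine ⟨(((l : ℝ) - m) + Real.sqrt D) / 2, (((l : ℝ) - m) - Real.sqrt D) / 2, ?_, ?_, ?_, ?_, ?_⟩
    · linarith
    · -- s ≤ 0 : √D ≥ l - m
      have : (l : ℝ) - m ≤ Real.sqrt D := by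
        rcases le_or_gt ((l : ℝ) - m) 0 with hc | hc
        · linarith [hsqrt_pos.le]
        · nlinarith [hsqrt_pos.le]
      linarith
    · -- 0 ≤ r : √D ≥ m - l
      have : (m : ℝ) - l ≤ Real.sqrt D := by
        rcases le_or_gt ((m : ℝ) - l) 0 with hc | hc
        · linarith [hsqrt_pos.le]
        · nlinarith [hsqrt_pos.le]
      linarith
    · -- r ≤ k : √D ≤ 2k - l + m
      have key : Real.sqrt D ≤ 2 * (k : ℝ) - l + m := by
        nlinarith [hsqrt_pos.le, hsq]
      linarith
    · intro x
      have hfact : x ^ 2 + ((m : ℝ) - l) * x + ((m : ℝ) - k)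
          = (x - (((l : ℝ) - m) + Real.sqrt D) / 2) * (x - (((l : ℝ) - m) - Real.sqrt D) / 2) := by
        linear_combination ((1 : ℝ) / 4) * hsq
      constructor
      · intro hx
        rw [hfact] at hx
        rcases mul_eq_zero.mp hx with h' | h'
        · exact Or.inl (by linarith [sub_eq_zero.mp h'])
        · exact Or.inr (by linarith [sub_eq_zero.mp h'])
      · rintro (rfl | rfl) <;> rw [hfact] <;> ring
end

section
/- Let Γ be a connected finite simple graph on n vertices that is strongly regular with parameters (n, k, λ, μ) with 0 < k < n − 1, let r > s be the two real roots of x² + (μ − λ)x + (μ − k), and let f and g denote the multiplicities of r and s, respectively, as eigenvalues of the adjacency matrix of Γ over ℝ (i.e. the dimensions of the corresponding eigenspaces). Then 1 + f + g = n, k + f·r + g·s = 0, and consequently f = (−s(n − 1) − k)/(r − s) and g = (r(n − 1) + k)/(r − s). -/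
/-!
Write `A` for the adjacency matrix and `J` for the all-ones matrix. Strong regularity says
`A² = k + λA + μ(J - 1 - A)`, i.e. `(A - r)(A - s) = μJ`. An eigenvector for an eigenvalue
`t ∉ {r, s}` is therefore constant, hence `t = k`; and since `Γ` is connected the `k`-eigenspace
is the kernel of the Laplacian, which is one-dimensional. Connectedness and `k < n - 1` give
`μ > 0`, which keeps `k` away from `r` and `s`. As `A` is symmetric, the spectral theorem turns
the dimension count and `trace A = 0` into `1 + f + g = n` and `k + f r + g s = 0`.
-/

open Matrix

theorem add_eq_neg_and_mul_eq_of_sq_add_mul_add_eq_zero {K : Type*} [Field K] {b c r s : K}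
    (hrs : r ≠ s) (hr : r ^ 2 + b * r + c = 0) (hs : s ^ 2 + b * s + c = 0) :
    r + s = -b ∧ r * s = c := by
  have hsum : r + s = -b := by
    have hfactor : (r - s) * (r + s + b) = 0 := by linear_combination hr - hs
    linear_combination (mul_eq_zero.mp hfactor).resolve_left (sub_ne_zero.mpr hrs)
  exact ⟨hsum, by linear_combination r * hsum - hr⟩

theorem Module.End.eigenspace_conj {R M N : Type*} [CommRing R] [AddCommGroup M] [Module R M]
    [AddCommGroup N] [Module R N] (e : M ≃ₗ[R] N) (f : Module.End R M) (μ : R) :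
    eigenspace (e.conj f) μ = (eigenspace f μ).map (e : M →ₗ[R] N) := by
  ext x
  simp only [mem_eigenspace_iff, Submodule.mem_map_equiv, LinearEquiv.conj_apply_apply]
  rw [← e.symm.injective.eq_iff, LinearEquiv.symm_apply_apply, map_smul]

namespace LinearMap.IsSymmetric

variable {𝕜 E : Type*} [RCLike 𝕜] [NormedAddCommGroup E] [InnerProductSpace 𝕜 E]
  [FiniteDimensional 𝕜 E] {T : E →ₗ[𝕜] E}

theorem sum_finrank_eigenspace_eq_finrank (hT : T.IsSymmetric) {S : Finset ℝ}
    (hS : ∀ μ : ℝ, Module.End.HasEigenvalue T μ → μ ∈ S) :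
    ∑ μ ∈ S, Module.finrank 𝕜 (Module.End.eigenspace T μ) = Module.finrank 𝕜 E := by
  simp_rw [← hT.card_filter_eigenvalues_eq rfl, RCLike.ofReal_inj]
  rw [← Finset.card_eq_sum_card_fiberwise fun i _ ↦ hS _ (hT.hasEigenvalue_eigenvalues rfl i),
    Finset.card_univ, Fintype.card_fin]

theorem trace_eq_sum_mul_finrank_eigenspace (hT : T.IsSymmetric) {S : Finset ℝ}
    (hS : ∀ μ : ℝ, Module.End.HasEigenvalue T μ → μ ∈ S) :
    T.trace 𝕜 E = ∑ μ ∈ S, (μ : 𝕜) * Module.finrank 𝕜 (Module.End.eigenspace T μ) := by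
  simp_rw [hT.trace_eq_sum_eigenvalues rfl, ← hT.card_filter_eigenvalues_eq rfl,
    RCLike.ofReal_inj]
  rw [← Finset.sum_fiberwise_of_maps_to fun i _ ↦ hS _ (hT.hasEigenvalue_eigenvalues rfl i)]
  push_cast
  refine Finset.sum_congr rfl fun μ _ ↦ ?_
  rw [Finset.sum_congr rfl fun i hi ↦ congrArg _ (Finset.mem_filter.mp hi).2, Finset.sum_const,
    nsmul_eq_mul, mul_comm]

end LinearMap.IsSymmetric

namespace Matrix

variable {𝕜 n : Type*} [RCLike 𝕜] [Fintype n] [DecidableEq n]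

theorem eigenspace_toEuclideanLin (A : Matrix n n 𝕜) (μ : 𝕜) :
    Module.End.eigenspace (toEuclideanLin A) μ =
      (Module.End.eigenspace (mulVecLin A) μ).map
        ((WithLp.linearEquiv 2 𝕜 (n → 𝕜)).symm : (n → 𝕜) →ₗ[𝕜] EuclideanSpace 𝕜 n) :=
  Module.End.eigenspace_conj _ _ μ

theorem finrank_eigenspace_toEuclideanLin (A : Matrix n n 𝕜) (μ : 𝕜) :
    Module.finrank 𝕜 (Module.End.eigenspace (toEuclideanLin A) μ) =
      Module.finrank 𝕜 (Module.End.eigenspace (mulVecLin A) μ) := by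
  rw [eigenspace_toEuclideanLin, LinearEquiv.finrank_map_eq]

theorem hasEigenvalue_toEuclideanLin_iff (A : Matrix n n 𝕜) (μ : 𝕜) :
    Module.End.HasEigenvalue (toEuclideanLin A) μ ↔
      Module.End.HasEigenvalue (mulVecLin A) μ := by
  simp only [Module.End.hasEigenvalue_iff, eigenspace_toEuclideanLin, ne_eq,
    Submodule.map_eq_bot_iff]

namespace IsHermitian

variable {A : Matrix n n 𝕜}

theorem sum_finrank_eigenspace_eq_card (hA : A.IsHermitian) {S : Finset ℝ}
    (hS : ∀ μ : ℝ, Module.End.HasEigenvalue (mulVecLin A) μ → μ ∈ S) :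
    ∑ μ ∈ S, Module.finrank 𝕜 (Module.End.eigenspace (mulVecLin A) μ) = Fintype.card n := by
  simp_rw [← finrank_eigenspace_toEuclideanLin, ← finrank_euclideanSpace (𝕜 := 𝕜)]
  exact (isSymmetric_toEuclideanLin_iff.mpr hA).sum_finrank_eigenspace_eq_finrank
    fun μ hμ ↦ hS μ ((hasEigenvalue_toEuclideanLin_iff A μ).mp hμ)

theorem trace_eq_sum_mul_finrank_eigenspace (hA : A.IsHermitian) {S : Finset ℝ}
    (hS : ∀ μ : ℝ, Module.End.HasEigenvalue (mulVecLin A) μ → μ ∈ S) :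
    A.trace = ∑ μ ∈ S, (μ : 𝕜) * Module.finrank 𝕜 (Module.End.eigenspace (mulVecLin A) μ) := by
  simp_rw [← finrank_eigenspace_toEuclideanLin]
  rw [← (isSymmetric_toEuclideanLin_iff.mpr hA).trace_eq_sum_mul_finrank_eigenspace
      fun μ hμ ↦ hS μ ((hasEigenvalue_toEuclideanLin_iff A μ).mp hμ),
    toEuclideanLin_eq_toLin_orthonormal, trace_toLin_eq]

end IsHermitian

end Matrix

namespace SimpleGraph

variable {V : Type*} {G : SimpleGraph V}

theorem Connected.exists_adj_adj_not_adj_ne (hconn : G.Connected) {u v : V} (huv : u ≠ v)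
    (hadj : ¬G.Adj u v) : ∃ x a b : V, G.Adj x a ∧ G.Adj a b ∧ ¬G.Adj x b ∧ x ≠ b := by
  obtain ⟨p, hp⟩ := hconn.exists_walk_length_eq_dist u v
  exact p.exists_adj_adj_not_adj_ne hp (hconn.one_lt_dist_of_ne_of_not_adj huv hadj)

variable [Fintype V] [DecidableRel G.Adj] {n k ℓ μ : ℕ}

theorem IsSRGWith.lt_of_adj (h : G.IsSRGWith n k ℓ μ) {v w : V} (hvw : G.Adj v w) : ℓ < k := by
  simpa [h.of_adj v w hvw, h.regular v] using hvw.card_commonNeighbors_lt_degree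

theorem IsSRGWith.pos_of_adj_adj (h : G.IsSRGWith n k ℓ μ) {x a b : V} (hxa : G.Adj x a)
    (hab : G.Adj a b) (hxb : ¬G.Adj x b) (hne : x ≠ b) : 0 < μ := by
  rw [← h.of_not_adj hne hxb, Fintype.card_pos_iff]
  exact ⟨⟨a, hxa, hab.symm⟩⟩

variable [DecidableEq V]

theorem IsSRGWith.exists_ne_not_adj (h : G.IsSRGWith n k ℓ μ) (hkn : k + 1 < n) :
    ∃ u v : V, u ≠ v ∧ ¬G.Adj u v := by
  obtain ⟨u⟩ : Nonempty V := by rw [← Fintype.card_pos_iff, h.card]; omega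
  obtain ⟨v, huv⟩ := (Gᶜ.degree_pos_iff_exists_adj u).mp (by rw [h.compl.regular u]; omega)
  exact ⟨u, v, (compl_adj ..).mp huv⟩

theorem IsSRGWith.sq_add_mul_add_ne_zero (h : G.IsSRGWith n k ℓ μ) (hconn : G.Connected)
    (hkn : k + 1 < n) : (k : ℝ) ^ 2 + ((μ : ℝ) - ℓ) * k + ((μ : ℝ) - k) ≠ 0 := by
  obtain ⟨u, v, huv, hadj⟩ := h.exists_ne_not_adj hkn
  obtain ⟨x, a, b, hxa, hab, hxb, hne⟩ := hconn.exists_adj_adj_not_adj_ne huv hadj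
  have hℓ : (ℓ : ℝ) + 1 ≤ k := by exact_mod_cast h.lt_of_adj hxa
  have hμ : (1 : ℝ) ≤ μ := by exact_mod_cast h.pos_of_adj_adj hxa hab hxb hne
  -- the left-hand side is `k (k - ℓ - 1) + μ (k + 1)`
  nlinarith

theorem IsSRGWith.adjMatrix_sub_smul_mul_adjMatrix_sub_smul {K : Type*} [CommRing K]
    (h : G.IsSRGWith n k ℓ μ) {r s : K} (hsum : r + s = ℓ - μ) (hprod : r * s = μ - k) :
    (G.adjMatrix K - r • 1) * (G.adjMatrix K - s • 1) = (μ : K) • of 1 := by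
  classical
  have hsq := h.matrix_eq (α := K)
  rw [← compl_adjMatrix_eq_adjMatrix_compl] at hsq
  rw [← G.one_add_adjMatrix_add_compl_adjMatrix_eq_of_one (α := K)]
  set A := G.adjMatrix K
  calc (A - r • 1) * (A - s • 1) = A ^ 2 - (r + s) • A + (r * s) • 1 := by
        simp only [sq, sub_mul, mul_sub, Matrix.smul_mul, Matrix.mul_smul, Matrix.one_mul,
          Matrix.mul_one, smul_smul, add_smul, mul_comm s r]
        abel
    _ = _ := by
        rw [hsq, hsum, hprod]
        simp only [← Nat.cast_smul_eq_nsmul K]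
        module

theorem IsRegularOfDegree.eigenspace_adjMatrix_eq_bot {K : Type*} [Field K] {d : ℕ}
    (hd : G.IsRegularOfDegree d) {r s c : K}
    (hA : (G.adjMatrix K - r • 1) * (G.adjMatrix K - s • 1) = c • of 1) {t : K}
    (htd : t ≠ d) (htr : t ≠ r) (hts : t ≠ s) :
    Module.End.eigenspace (mulVecLin (G.adjMatrix K)) t = ⊥ := by
  refine (Submodule.eq_bot_iff _).mpr fun x hx ↦ ?_
  rw [Module.End.mem_eigenspace_iff, mulVecLin_apply] at hx
  have hq : (t - r) * (t - s) ≠ 0 := mul_ne_zero (sub_ne_zero.mpr htr) (sub_ne_zero.mpr hts)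
  -- `(t - r)(t - s) x = (A - r)(A - s) x = c (∑ i, x i) 𝟙`
  have hconst : x = Function.const V (c * (∑ i, x i) / ((t - r) * (t - s))) := by
    have hx' : ((G.adjMatrix K - r • 1) * (G.adjMatrix K - s • 1)) *ᵥ x =
        ((t - r) * (t - s)) • x := by
      simp only [← mulVec_mulVec, sub_mulVec, smul_mulVec, one_mulVec, hx, mulVec_sub,
        mulVec_smul]
      module
    rw [hA] at hx'
    funext i
    have hxi := congrFun hx' i
    simp only [mulVec, dotProduct, Matrix.smul_apply, of_apply, Pi.one_apply, smul_eq_mul,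
      mul_one, ← Finset.mul_sum, Pi.smul_apply] at hxi
    rw [Function.const_apply, eq_div_iff hq]
    linear_combination -hxi
  have hdx : (d : K) • x = t • x := by
    rw [← hx, hconst]
    funext i
    simp [adjMatrix_mulVec_const_apply_of_regular hd]
  have hdtx : ((d : K) - t) • x = 0 := by rw [sub_smul, hdx, sub_self]
  exact (smul_eq_zero.mp hdtx).resolve_left (sub_ne_zero.mpr htd.symm)

theorem IsRegularOfDegree.eigenspace_adjMatrix_eq_ker_lapMatrix {K : Type*} [Field K] {d : ℕ}
    (hd : G.IsRegularOfDegree d) :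
    Module.End.eigenspace (mulVecLin (G.adjMatrix K)) d =
      LinearMap.ker (toLin' (G.lapMatrix K)) := by
  ext x
  simp only [Module.End.mem_eigenspace_iff, LinearMap.mem_ker, toLin'_apply, mulVecLin_apply,
    lapMatrix, sub_mulVec, sub_eq_zero, funext_iff, degMatrix_mulVec_apply, hd _, Pi.smul_apply,
    smul_eq_mul]
  exact forall_congr' fun _ ↦ eq_comm

theorem Connected.finrank_eigenspace_adjMatrix_degree (hconn : G.Connected) {d : ℕ}
    (hd : G.IsRegularOfDegree d) :
    Module.finrank ℝ (Module.End.eigenspace (mulVecLin (G.adjMatrix ℝ)) d) = 1 := by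
  rw [hd.eigenspace_adjMatrix_eq_ker_lapMatrix,
    ← card_connectedComponent_eq_finrank_ker_toLin'_lapMatrix]
  have := hconn.preconnected.subsingleton_connectedComponent
  obtain ⟨v⟩ := hconn.nonempty
  exact Fintype.card_eq_one_iff.mpr ⟨G.connectedComponentMk v, fun _ ↦ Subsingleton.elim _ _⟩

end SimpleGraph

theorem stmt_7_general {V : Type*} [Fintype V] [DecidableEq V]
    (Γ : SimpleGraph V) [DecidableRel Γ.Adj]
    (n k l m : ℕ) (h : Γ.IsSRGWith n k l m) (hconn : Γ.Connected)
    (hkn : k + 1 < n)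
    (r s : ℝ) (hrs : s < r)
    (hr : r ^ 2 + ((m : ℝ) - l) * r + ((m : ℝ) - k) = 0)
    (hs : s ^ 2 + ((m : ℝ) - l) * s + ((m : ℝ) - k) = 0)
    (f g : ℕ)
    (hf : f = Module.finrank ℝ
      (Module.End.eigenspace (Matrix.mulVecLin (Γ.adjMatrix ℝ)) r))
    (hg : g = Module.finrank ℝ
      (Module.End.eigenspace (Matrix.mulVecLin (Γ.adjMatrix ℝ)) s)) :
    1 + f + g = n ∧ (k : ℝ) + f * r + g * s = 0 ∧
    (f : ℝ) = (-s * ((n : ℝ) - 1) - k) / (r - s) ∧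
    (g : ℝ) = (r * ((n : ℝ) - 1) + k) / (r - s) := by
  obtain ⟨hsum, hprod⟩ := add_eq_neg_and_mul_eq_of_sq_add_mul_add_eq_zero hrs.ne' hr hs
  have hkr : (k : ℝ) ≠ r := fun hk ↦ h.sq_add_mul_add_ne_zero hconn hkn (hk ▸ hr)
  have hks : (k : ℝ) ≠ s := fun hk ↦ h.sq_add_mul_add_ne_zero hconn hkn (hk ▸ hs)
  have hJ := h.adjMatrix_sub_smul_mul_adjMatrix_sub_smul (by rw [hsum]; ring) hprod
  have hspec : ∀ t : ℝ, Module.End.HasEigenvalue (mulVecLin (Γ.adjMatrix ℝ)) t →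
      t ∈ ({(k : ℝ), r, s} : Finset ℝ) := by
    intro t ht
    by_contra hmem
    simp only [Finset.mem_insert, Finset.mem_singleton, not_or] at hmem
    exact ht (h.regular.eigenspace_adjMatrix_eq_bot hJ hmem.1 hmem.2.1 hmem.2.2)
  have hA := Γ.isHermitian_adjMatrix ℝ
  have hdim := hA.sum_finrank_eigenspace_eq_card hspec
  have htrace := hA.trace_eq_sum_mul_finrank_eigenspace hspec
  have hnotmem : (k : ℝ) ∉ ({r, s} : Finset ℝ) := by simp [hkr, hks]
  simp only [RCLike.ofReal_real_eq_id, id] at hdim htrace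
  rw [Finset.sum_insert hnotmem, Finset.sum_pair hrs.ne',
    hconn.finrank_eigenspace_adjMatrix_degree h.regular, ← hf, ← hg] at hdim htrace
  rw [h.card] at hdim
  rw [SimpleGraph.trace_adjMatrix, Nat.cast_one] at htrace
  have hdim_real : (f : ℝ) + g = n - 1 := by
    rw [← hdim]; push_cast; ring
  refine ⟨by omega, by linear_combination -htrace, ?_, ?_⟩ <;>
    rw [eq_div_iff (sub_ne_zero.mpr hrs.ne')]
  · linear_combination -htrace - s * hdim_real
  · linear_combination r * hdim_real + htrace

/-- Multiplicities of the restricted eigenvalues of a connected strongly regular graph: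
with `r > s` the roots of `x² + (μ − λ)x + (μ − k)` and `f`, `g` the dimensions of the
corresponding eigenspaces of the adjacency matrix, one has `1 + f + g = n`,
`k + f r + g s = 0`, `f = (−s(n−1) − k)/(r − s)` and `g = (r(n−1) + k)/(r − s)`. -/
theorem stmt_7 {V : Type*} [Fintype V] [DecidableEq V]
    (Γ : SimpleGraph V) [DecidableRel Γ.Adj]
    (n k l m : ℕ) (h : Γ.IsSRGWith n k l m) (hconn : Γ.Connected)
    (hk0 : 0 < k) (hkn : k + 1 < n)
    (r s : ℝ) (hrs : s < r)
    (hr : r ^ 2 + ((m : ℝ) - l) * r + ((m : ℝ) - k) = 0)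
    (hs : s ^ 2 + ((m : ℝ) - l) * s + ((m : ℝ) - k) = 0)
    (f g : ℕ)
    (hf : f = Module.finrank ℝ
      (Module.End.eigenspace (Matrix.mulVecLin (Γ.adjMatrix ℝ)) r))
    (hg : g = Module.finrank ℝ
      (Module.End.eigenspace (Matrix.mulVecLin (Γ.adjMatrix ℝ)) s)) :
    1 + f + g = n ∧ (k : ℝ) + f * r + g * s = 0 ∧
    (f : ℝ) = (-s * ((n : ℝ) - 1) - k) / (r - s) ∧
    (g : ℝ) = (r * ((n : ℝ) - 1) + k) / (r - s) :=
  stmt_7_general Γ n k l m h hconn hkn r s hrs hr hs f g hf hg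
end

section
/- Let G be a group and D a normal set (a union of conjugacy classes) of elements of order 2 in G such that for all d, e ∈ D the order of d * e is 1, 2, or 3. Let the diagram of D be the simple graph on vertex set D in which d and e are adjacent iff d * e has order 3. Then: (i) if d, e ∈ D lie in distinct connected components of the diagram, then d * e = e * d; (ii) for each connected component Dᵢ of the diagram, Dᵢ is a single conjugacy class of the subgroup Gᵢ = ⟨Dᵢ⟩ generated by it; (iii) for distinct connected components Dᵢ and Dⱼ, the subgroups ⟨Dᵢ⟩ and ⟨Dⱼ⟩ centralize each other. -/
/-- Fischer's inheritance property for a normal set `D` of 3-transpositions in `G`,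
with diagram the graph on `D` joining `d`, `e` when `d * e` has order 3:
(i) elements of `D` in distinct connected components of the diagram commute;
(ii) each connected component `Dᵢ` is a single conjugacy class of `⟨Dᵢ⟩`
(it is closed under conjugation by `⟨Dᵢ⟩` and `⟨Dᵢ⟩` acts transitively on it by
conjugation);
(iii) the subgroups generated by distinct connected components centralize each
other. -/
theorem stmt_11 {G : Type*} [Group G] (D : Set G)
    (hnormal : ∀ d ∈ D, ∀ g : G, g * d * g⁻¹ ∈ D)
    (horder : ∀ d ∈ D, orderOf d = 2)
    (h3 : ∀ d ∈ D, ∀ e ∈ D,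
      orderOf (d * e) = 1 ∨ orderOf (d * e) = 2 ∨ orderOf (d * e) = 3)
    (Γ : SimpleGraph D)
    (hΓ : Γ = SimpleGraph.fromRel (fun d e : D => orderOf ((d : G) * e) = 3)) :
    (∀ d e : D, Γ.connectedComponentMk d ≠ Γ.connectedComponentMk e →
        (d : G) * e = e * d) ∧
    (∀ c : Γ.ConnectedComponent,
      (∀ x ∈ Subtype.val '' {d : D | Γ.connectedComponentMk d = c},
       ∀ y ∈ Subtype.val '' {d : D | Γ.connectedComponentMk d = c},
        ∃ g ∈ Subgroup.closure (Subtype.val '' {d : D | Γ.connectedComponentMk d = c}),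
          g * x * g⁻¹ = y) ∧
      (∀ g ∈ Subgroup.closure (Subtype.val '' {d : D | Γ.connectedComponentMk d = c}),
       ∀ x ∈ Subtype.val '' {d : D | Γ.connectedComponentMk d = c},
          g * x * g⁻¹ ∈ Subtype.val '' {d : D | Γ.connectedComponentMk d = c})) ∧
    (∀ c₁ c₂ : Γ.ConnectedComponent, c₁ ≠ c₂ →
      ∀ x ∈ Subgroup.closure (Subtype.val '' {d : D | Γ.connectedComponentMk d = c₁}),
      ∀ y ∈ Subgroup.closure (Subtype.val '' {d : D | Γ.connectedComponentMk d = c₂}),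
        x * y = y * x) := by
  -- basic facts
  have hsq : ∀ d ∈ D, d * d = 1 := by
    intro d hd
    have := pow_orderOf_eq_one d
    rw [horder d hd] at this
    simpa [pow_succ] using this
  have hinv : ∀ d ∈ D, d⁻¹ = d := by
    intro d hd
    rw [inv_eq_iff_mul_eq_one]; exact hsq d hd
  have hoc : ∀ a b : G, orderOf (a * b) = orderOf (b * a) := by
    intro a b
    exact (SemiconjBy.orderOf_eq a (by rw [SemiconjBy, mul_assoc])).symm
  have hadj : ∀ d e : D, Γ.Adj d e ↔ (d ≠ e ∧ orderOf ((d : G) * e) = 3) := by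
    subst hΓ
    intro d e
    rw [SimpleGraph.fromRel_adj]
    constructor
    · rintro ⟨hne, h | h⟩
      · exact ⟨hne, h⟩
      · exact ⟨hne, by rw [hoc]; exact h⟩
    · rintro ⟨hne, h⟩; exact ⟨hne, Or.inl h⟩
  -- commuting when order ≠ 3
  have hcomm : ∀ d ∈ D, ∀ e ∈ D, orderOf (d * e) ≠ 3 → d * e = e * d := by
    intro d hd e he hne3
    rcases h3 d hd e he with h | h | h
    · have h1 : d * e = 1 := orderOf_eq_one_iff.mp h
      have : e = d := by
        have := congrArg (fun x => d * x) h1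
        simpa [← mul_assoc, hsq d hd] using this
      rw [this]
    · have h1 : (d * e) * (d * e) = 1 := by
        have := pow_orderOf_eq_one (d * e); rw [h] at this; simpa [pow_succ] using this
      have : d * e = (d * e)⁻¹ := by
        rw [eq_inv_iff_mul_eq_one]; exact h1
      rw [this, mul_inv_rev, hinv d hd, hinv e he]
    · exact absurd h hne3
  -- part (i)
  have part1 : ∀ d e : D, Γ.connectedComponentMk d ≠ Γ.connectedComponentMk e →
      (d : G) * e = e * d := by
    intro d e hne
    have hna : ¬ Γ.Adj d e := fun h => hne (SimpleGraph.ConnectedComponent.connectedComponentMk_eq_of_adj h)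
    rw [hadj] at hna
    push_neg at hna
    by_cases hde : d = e
    · rw [hde]
    · exact hcomm d d.2 e e.2 (hna hde)
  -- membership of conjugates
  have hmem : ∀ d e : D, (d : G) * e * d ∈ D := by
    intro d e
    have := hnormal e e.2 d
    rwa [hinv (d : G) d.2] at this
  -- conjugation preserves components
  have hConj : ∀ d e : D,
      Γ.connectedComponentMk (⟨(d : G) * e * d, hmem d e⟩ : D) = Γ.connectedComponentMk e := by
    intro d e
    by_cases h : orderOf ((d : G) * e) = 3
    · have hde : d ≠ e := by
        rintro rfl
        rw [hsq d d.2] at h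
        simp at h
      have a1 : Γ.Adj (⟨(d : G) * e * d, hmem d e⟩ : D) d := by
        rw [hadj]
        constructor
        · intro hx
          have hx' : (d : G) * e * d = d := congrArg Subtype.val hx
          have h2 : (e : G) * d = 1 := by
            have := congrArg (fun x => (d:G) * x) hx'
            simpa [← mul_assoc, hsq (d:G) d.2] using this
          have h4 : (e : G) = (d : G)⁻¹ := eq_inv_of_mul_eq_one_left h2
          rw [hinv (d:G) d.2] at h4
          exact hde (Subtype.ext h4.symm)
        · show orderOf ((d : G) * e * d * d) = 3
          rw [mul_assoc, hsq (d:G) d.2, mul_one]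
          exact h
      have a2 : Γ.Adj d e := by
        rw [hadj]
        exact ⟨hde, h⟩
      calc Γ.connectedComponentMk (⟨(d : G) * e * d, hmem d e⟩ : D)
          = Γ.connectedComponentMk d := SimpleGraph.ConnectedComponent.connectedComponentMk_eq_of_adj a1
        _ = Γ.connectedComponentMk e := SimpleGraph.ConnectedComponent.connectedComponentMk_eq_of_adj a2
    · have hc := hcomm d d.2 e e.2 h
      have : ((⟨(d : G) * e * d, hmem d e⟩ : D) : G) = (e : G) := by
        show (d : G) * e * d = e
        rw [hc, mul_assoc, hsq (d:G) d.2, mul_one]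
      rw [Subtype.ext this]
  -- key conjugation formula for adjacent elements
  have step : ∀ a m : G, a ∈ D → m ∈ D → orderOf (a * m) = 3 →
      (a * m) * a * (a * m)⁻¹ = m := by
    intro a m ha hm h3'
    have h1 : (a * m) ^ 3 = 1 := by rw [← h3']; exact pow_orderOf_eq_one _
    have hx : (a * m)⁻¹ = (a * m) ^ 2 := by
      symm
      rw [eq_inv_iff_mul_eq_one, ← pow_succ]
      simpa using h1
    have ha2 : ∀ t : G, a * (a * t) = t := by
      intro t; rw [← mul_assoc, hsq a ha, one_mul]
    have hm2 : ∀ t : G, m * (m * t) = t := by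
      intro t; rw [← mul_assoc, hsq m hm, one_mul]
    rw [hx]
    simp [pow_two, mul_assoc, ha2, hm2, hsq a ha, hsq m hm]
  refine ⟨part1, ?_, ?_⟩
  · intro c
    constructor
    · -- transitivity
      have key : ∀ (a b : D) (w : Γ.Walk a b), Γ.connectedComponentMk a = c →
          ∃ g ∈ Subgroup.closure (Subtype.val '' {d : D | Γ.connectedComponentMk d = c}),
            g * (a : G) * g⁻¹ = (b : G) := by
        intro a b w
        induction w with
        | nil => exact fun _ => ⟨1, Subgroup.one_mem _, by group⟩
        | @cons u v b h p ih =>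
          intro huc
          have hvc : Γ.connectedComponentMk v = c := by
            rw [← (SimpleGraph.ConnectedComponent.connectedComponentMk_eq_of_adj h)]; exact huc
          obtain ⟨g, hg, hgb⟩ := ih hvc
          rw [hadj] at h
          refine ⟨g * ((u : G) * v),
            mul_mem hg (mul_mem (Subgroup.subset_closure ⟨u, huc, rfl⟩)
              (Subgroup.subset_closure ⟨v, hvc, rfl⟩)), ?_⟩
          have hst := step (u : G) (v : G) u.2 v.2 h.2
          calc g * ((u:G) * v) * u * (g * ((u:G) * v))⁻¹
              = g * (((u:G) * v) * u * ((u:G) * v)⁻¹) * g⁻¹ := by group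
            _ = g * v * g⁻¹ := by rw [hst]
            _ = (b : G) := hgb
      rintro x ⟨d, hd, rfl⟩ y ⟨e, he, rfl⟩
      have hreach : Γ.Reachable d e := by
        apply SimpleGraph.ConnectedComponent.exact
        rw [hd, he]
      obtain ⟨w⟩ := hreach
      exact key d e w hd
    · -- closure under conjugation
      intro g hg
      have main : ∀ x : G,
          (x ∈ Subtype.val '' {d : D | Γ.connectedComponentMk d = c} ↔
           g * x * g⁻¹ ∈ Subtype.val '' {d : D | Γ.connectedComponentMk d = c}) := by
        refine Subgroup.closure_induction (fun d hd x => ?_) (fun x => by simp)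
          (fun a b _ _ iha ihb x => ?_) (fun a _ iha x => ?_) hg
        · obtain ⟨d', hd', rfl⟩ := hd
          have fwd : ∀ y : G, y ∈ Subtype.val '' {d : D | Γ.connectedComponentMk d = c} →
              (d' : G) * y * (d' : G)⁻¹ ∈
                Subtype.val '' {d : D | Γ.connectedComponentMk d = c} := by
            rintro y ⟨e, he, rfl⟩
            rw [hinv (d' : G) d'.2]
            exact ⟨⟨(d' : G) * e * d', hmem d' e⟩, by rw [Set.mem_setOf_eq, hConj d' e]; exact he, rfl⟩
          constructor
          · exact fwd x
          · intro hx
            have := fwd _ hx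
            have heq : (d' : G) * ((d' : G) * x * (d' : G)⁻¹) * (d' : G)⁻¹ = x := by
              rw [hinv (d' : G) d'.2]
              have hd2 : ∀ t : G, (d' : G) * ((d' : G) * t) = t := by
                intro t; rw [← mul_assoc, hsq (d' : G) d'.2, one_mul]
              simp [mul_assoc, hd2, hsq (d' : G) d'.2]
            rwa [heq] at this
        · have : a * b * x * (a * b)⁻¹ = a * (b * x * b⁻¹) * a⁻¹ := by group
          rw [this]
          exact (ihb x).trans (iha (b * x * b⁻¹))
        · have h1 := (iha (a⁻¹ * x * a)).symm
          have : a * (a⁻¹ * x * a) * a⁻¹ = x := by group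
          rw [this] at h1
          rw [inv_inv]
          exact h1
      intro x hx
      exact (main x).mp hx
  · -- part (iii)
    intro c₁ c₂ hne x hx y hy
    have base : ∀ d ∈ Subtype.val '' {d : D | Γ.connectedComponentMk d = c₁},
        ∀ e ∈ Subtype.val '' {d : D | Γ.connectedComponentMk d = c₂}, d * e = e * d := by
      rintro _ ⟨d, hd, rfl⟩ _ ⟨e, he, rfl⟩
      exact part1 d e (by rw [hd, he]; exact hne)
    have h1 : ∀ d ∈ Subtype.val '' {d : D | Γ.connectedComponentMk d = c₁},
        Commute d y := by
      intro d hd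
      refine Subgroup.closure_induction (fun e he => base d hd e he) (Commute.one_right d)
        (fun a b _ _ iha ihb => iha.mul_right ihb) (fun a _ iha => iha.inv_right) hy
    show Commute x y
    refine Subgroup.closure_induction (fun d hd => h1 d hd) (Commute.one_left y)
      (fun a b _ _ iha ihb => iha.mul_left ihb) (fun a _ iha => iha.inv_left) hx
end

section
/- Let M be a symmetric n × n real matrix with eigenvalues λ₁, …, λₙ (listed with multiplicity, as given by the spectral theorem), and let q ≥ 1 be a natural number. Then the characteristic polynomial of the qn × qn matrix J_q ⊗ (M + Iₙ) − I_{qn}, where J_q is the q × q all-ones matrix, equals (X + 1)^{(q−1)n} · ∏_{i=1}^{n} (X − (q(λᵢ + 1) − 1)). In particular, its eigenvalues with multiplicity are q(λ₁ + 1) − 1, …, q(λₙ + 1) − 1 together with −1 repeated (q − 1)n times. -/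
/-!
Writing `S` for the `qn × n` matrix made of `q` stacked identity blocks, `J_q ⊗ B = S B Sᵀ` and
`Sᵀ S = q • 1`, so Sylvester's identity `X ^ n · χ(S C) = X ^ (qn) · χ(C S)` gives
`χ(J_q ⊗ B) = X ^ ((q - 1) n) · χ(q • B)`. Subtracting the identity substitutes `X + 1` for `X`,
and by the spectral theorem `q • (M + 1) - 1` has eigenvalues `q (λᵢ + 1) - 1`.
-/

open Matrix Kronecker Polynomial

namespace Matrix

variable {ι n R : Type*} [Fintype ι] [DecidableEq ι] [Fintype n] [DecidableEq n] [CommRing R]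

theorem charpoly_sub_one (A : Matrix n n R) : (A - 1).charpoly = A.charpoly.comp (X + 1) := by
  simpa using charpoly_sub_scalar A 1

theorem charpoly_ones_kronecker [Nonempty ι] (B : Matrix n n R) :
    ((of fun _ _ => 1 : Matrix ι ι R) ⊗ₖ B).charpoly
      = X ^ ((Fintype.card ι - 1) * Fintype.card n) * (Fintype.card ι • B).charpoly := by
  set S : Matrix (ι × n) n R := (1 : Matrix n n R).submatrix Prod.snd id
  have hfactor : (of fun _ _ => 1 : Matrix ι ι R) ⊗ₖ B = S * (B * Sᵀ) := by
    ext ⟨a, i⟩ ⟨b, j⟩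
    simp [S, mul_apply, one_apply]
  have hgram : Sᵀ * S = Fintype.card ι • 1 := by
    ext j k
    by_cases h : j = k <;> simp [S, mul_apply, one_apply, Fintype.sum_prod_type, h]
  have hle : Fintype.card n ≤ Fintype.card (ι × n) := by
    rw [Fintype.card_prod]
    exact Nat.le_mul_of_pos_left _ Fintype.card_pos
  rw [hfactor, charpoly_mul_comm_of_le _ _ hle, Matrix.mul_assoc, hgram, Matrix.mul_smul,
    mul_one, Fintype.card_prod, ← Nat.sub_one_mul]

theorem IsHermitian.charpoly_smul_add_smul_one {𝕜 : Type*} [RCLike 𝕜] {A : Matrix n n 𝕜}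
    (hA : A.IsHermitian) (a b : 𝕜) :
    (a • A + b • 1).charpoly = ∏ i, (X - C (a * hA.eigenvalues i + b)) := by
  set U := hA.eigenvectorUnitary
  have hconj : a • A + b • 1
      = Unitary.conjStarAlgAut 𝕜 _ U (diagonal fun i => a * hA.eigenvalues i + b) := by
    conv_lhs => rw [hA.spectral_theorem]
    rw [← map_one (Unitary.conjStarAlgAut 𝕜 _ U), ← map_smul, ← map_smul, ← map_add]
    congr 1
    ext i j
    by_cases h : i = j <;> simp [h]
  rw [hconj, Unitary.conjStarAlgAut_apply, charpoly_mul_comm, ← Matrix.mul_assoc]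
  simp [charpoly_diagonal]

end Matrix

/-- For a symmetric real `n × n` matrix `M` with eigenvalues `λᵢ` (with multiplicity,
from the spectral theorem), the characteristic polynomial of the matrix
`J_q ⊗ (M + I) − I` (with `J_q` the `q × q` all-ones matrix, `q ≥ 1`) is
`(X + 1)^((q−1)n) · ∏ᵢ (X − (q(λᵢ + 1) − 1))`. -/
theorem stmt_13 {n q : ℕ} (hq : 1 ≤ q) (M : Matrix (Fin n) (Fin n) ℝ)
    (hM : M.IsHermitian) :
    ((Matrix.of fun _ _ => (1 : ℝ) : Matrix (Fin q) (Fin q) ℝ) ⊗ₖ (M + 1) - 1).charpoly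
      = (X + 1) ^ ((q - 1) * n)
        * ∏ i : Fin n, (X - C ((q : ℝ) * (hM.eigenvalues i + 1) - 1)) := by
  have : Nonempty (Fin q) := ⟨⟨0, hq⟩⟩
  have haffine : q • (M + 1) - 1 = (q : ℝ) • M + ((q : ℝ) - 1) • 1 := by
    rw [← Nat.cast_smul_eq_nsmul ℝ]
    module
  rw [charpoly_sub_one, charpoly_ones_kronecker, Fintype.card_fin, Fintype.card_fin, mul_comp,
    X_pow_comp, ← charpoly_sub_one, haffine, hM.charpoly_smul_add_smul_one]
  refine congrArg _ (Finset.prod_congr rfl fun i _ => ?_)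
  simp only [RCLike.ofReal_real_eq_id, id]
  congr 2
  ring
end

section
/- Fix a natural number m ≥ 2 and equip V = (ZMod 2)^{2m} with the standard symplectic bilinear form B(x, y) = Σ_{i=0}^{m−1} (x_{2i} y_{2i+1} + x_{2i+1} y_{2i}). Let Γ be the simple graph whose vertices are the nonzero vectors of V, with x adjacent to y exactly when B(x, y) = 1. Then Γ is strongly regular with parameters (2^{2m} − 1, 2^{2m−1}, 2^{2m−2}, 2^{2m−2}), and the eigenvalues of its adjacency matrix over ℝ are 2^{2m−1} with multiplicity 1, 2^{m−1} with multiplicity 2^{2m−1} − 2^{m−1} − 1, and −2^{m−1} with multiplicity 2^{2m−1} + 2^{m−1} − 1. -/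
open Matrix

open scoped Classical

/-- The standard symplectic bilinear form on `(ZMod 2)^(2m)`:
`B(x, y) = Σ_{i<m} (x_{2i} y_{2i+1} + x_{2i+1} y_{2i})`. -/
def sympForm (m : ℕ) (x y : Fin (2 * m) → ZMod 2) : ZMod 2 :=
  ∑ i : Fin m,
    (x ⟨2 * i.val, by have := i.isLt; omega⟩ * y ⟨2 * i.val + 1, by have := i.isLt; omega⟩
      + x ⟨2 * i.val + 1, by have := i.isLt; omega⟩ * y ⟨2 * i.val, by have := i.isLt; omega⟩)

/-- The diagram of the 3-transposition group `Sp_{2m}(2)`: the graph on nonzero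
vectors of `(ZMod 2)^(2m)`, with `x` adjacent to `y` exactly when `B(x, y) = 1`. -/
noncomputable def sympGraph (m : ℕ) :
    SimpleGraph {x : Fin (2 * m) → ZMod 2 // x ≠ 0} :=
  SimpleGraph.fromRel (fun a b => sympForm m a b = 1)

/-!
For `v ≠ 0` the functional `B(v, ·)` is nonzero by nondegeneracy, and for distinct nonzero
`v, w` the map `x ↦ (B(v, x), B(w, x))` is onto `(ZMod 2)²`; all fibres of a surjective
homomorphism have the same size, which gives `k = 2^(2m-1)` and `λ = μ = 2^(2m-2)`.
Since `λ = μ`, the adjacency matrix satisfies `A² = (k - μ) I + μ J` and `A J = k J`, where `J`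
is the all-ones matrix, so suitable combinations of `A`, `I` and `J` are the projections onto
the eigenspaces of `A`, and the multiplicities are their traces.
-/

open Module

open Finset in
theorem AddMonoidHom.card_mul_card_fiber_of_surjective {G M : Type*} [AddGroup G] [Fintype G]
    [AddMonoid M] [Fintype M] (f : G →+ M) (hf : Function.Surjective f) (y : M) :
    Nat.card M * Nat.card {g // f g = y} = Nat.card G := by
  classical
  rw [Nat.card_eq_fintype_card, Nat.card_eq_fintype_card, Nat.card_eq_fintype_card,
    Fintype.card_subtype]
  calc Fintype.card M * #{g | f g = y} = ∑ z : M, #{g | f g = z} := by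
        rw [sum_congr rfl fun z _ => card_fiber_eq_of_mem_range f (hf z) (hf y)]
        simp
    _ = Fintype.card G := (card_eq_sum_card_fiberwise (by simp)).symm

theorem surjective_prod_of_ne_zmodTwo {V : Type*} [AddCommGroup V] [Module (ZMod 2) V]
    {φ ψ : V →ₗ[ZMod 2] ZMod 2} (hφ : φ ≠ 0) (hψ : ψ ≠ 0) (hφψ : φ ≠ ψ) :
    Function.Surjective (φ.prod ψ) := by
  obtain ⟨a, ha⟩ := DFunLike.ne_iff.mp hφ
  obtain ⟨b, hb⟩ := DFunLike.ne_iff.mp hψ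
  obtain ⟨c, hc⟩ := DFunLike.ne_iff.mp hφψ
  intro t
  -- `(φ, ψ)` takes values `(1, ψ a)`, `(φ b, 1)`, `(φ c, φ c + 1)`, which span `(ZMod 2)²`
  have span : ∀ pa qa pb qb pc qc t₁ t₂ : ZMod 2, pa = 1 → qb = 1 → pc ≠ qc →
      ∃ i j k : ZMod 2, i * pa + j * pb + k * pc = t₁ ∧ i * qa + j * qb + k * qc = t₂ := by
    decide
  obtain ⟨i, j, k, h₁, h₂⟩ := span _ (ψ a) (φ b) _ _ _ t.1 t.2
    (Fin.eq_one_of_ne_zero _ ha) (Fin.eq_one_of_ne_zero _ hb) hc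
  exact ⟨i • a + j • b + k • c, Prod.ext (by simpa using h₁) (by simpa using h₂)⟩

section EigenspaceProjection

variable {ι : Type*} [Fintype ι]

lemma Matrix.trace_of_one : (of 1 : Matrix ι ι ℝ).trace = Fintype.card ι := by
  simp [Matrix.trace]

variable [DecidableEq ι]

theorem Matrix.finrank_eigenspace_eq_trace {A P : Matrix ι ι ℝ} {θ : ℝ}
    (hAP : A * P = θ • P)    (hP : ∀ x ∈ End.eigenspace A.mulVecLin θ, P *ᵥ x = x) :
    (finrank ℝ (End.eigenspace A.mulVecLin θ) : ℝ) = P.trace := by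
  have hproj : LinearMap.IsProj (End.eigenspace A.mulVecLin θ) P.mulVecLin :=
    ⟨fun x => End.mem_eigenspace_iff.mpr (by simp [mulVec_mulVec, hAP, smul_mulVec]), hP⟩
  rw [← hproj.trace, ← toLin'_apply', trace_toLin'_eq]

variable {A : Matrix ι ι ℝ} {c k μ : ℝ}

lemma Matrix.sq_eq_add_mul_card [Nonempty ι] (hA2 : A ^ 2 = c • 1 + μ • of 1)
    (hAJ : A * of 1 = k • of 1) : k ^ 2 = c + μ * Fintype.card ι := by
  obtain ⟨i⟩ := ‹Nonempty ι›
  have h : (A ^ 2 * of 1 : Matrix ι ι ℝ) i i = k ^ 2 := by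
    rw [sq, Matrix.mul_assoc, hAJ, Matrix.mul_smul, hAJ, smul_smul]
    simp [sq]
  rw [hA2, Matrix.add_mul, Matrix.smul_mul, Matrix.smul_mul, Matrix.one_mul] at h
  simpa [Matrix.mul_apply, eq_comm] using h

lemma Matrix.of_one_mulVec_eq_zero (hA2 : A ^ 2 = c • 1 + μ • of 1) (hμ : μ ≠ 0) {θ : ℝ}
    (hθ : θ ^ 2 = c) {x : ι → ℝ} (hx : x ∈ End.eigenspace A.mulVecLin θ) :
    (of 1 : Matrix ι ι ℝ) *ᵥ x = 0 := by
  have hx : A *ᵥ x = θ • x := End.mem_eigenspace_iff.mp hx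
  have h : (A ^ 2) *ᵥ x = θ ^ 2 • x := by
    rw [sq, ← mulVec_mulVec, hx, mulVec_smul, hx, smul_smul, sq]
  rw [hA2, add_mulVec, smul_mulVec, smul_mulVec, one_mulVec, hθ, add_eq_left,
    smul_eq_zero] at h
  exact h.resolve_left hμ

lemma Matrix.of_one_mulVec_eq_card_smul [Nonempty ι] (hA2 : A ^ 2 = c • 1 + μ • of 1)
    (hAJ : A * of 1 = k • of 1) (hμ : μ ≠ 0) {x : ι → ℝ}
    (hx : x ∈ End.eigenspace A.mulVecLin k) :
    (of 1 : Matrix ι ι ℝ) *ᵥ x = (Fintype.card ι : ℝ) • x := by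
  have hx : A *ᵥ x = k • x := End.mem_eigenspace_iff.mp hx
  have h : (A ^ 2) *ᵥ x = k ^ 2 • x := by
    rw [sq, ← mulVec_mulVec, hx, mulVec_smul, hx, smul_smul, sq]
  rw [hA2, add_mulVec, smul_mulVec, smul_mulVec, one_mulVec, sq_eq_add_mul_card hA2 hAJ,
    add_smul, add_right_inj, mul_smul] at h
  exact smul_right_injective _ hμ h

theorem Matrix.finrank_eigenspace_eq_one [Nonempty ι] (hA2 : A ^ 2 = c • 1 + μ • of 1)
    (hAJ : A * of 1 = k • of 1) (hμ : μ ≠ 0) :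
    finrank ℝ (End.eigenspace A.mulVecLin k) = 1 := by
  have hn : (Fintype.card ι : ℝ) ≠ 0 := by positivity
  have h := finrank_eigenspace_eq_trace
    (P := ((Fintype.card ι : ℝ)⁻¹ • of 1 : Matrix ι ι ℝ))
    (by rw [Matrix.mul_smul, hAJ, smul_comm])
    (fun x hx => by
      rw [smul_mulVec, of_one_mulVec_eq_card_smul hA2 hAJ hμ hx, smul_smul, inv_mul_cancel₀ hn,
        one_smul])
  rw [trace_smul, trace_of_one, smul_eq_mul, inv_mul_cancel₀ hn] at h
  exact_mod_cast h

theorem Matrix.finrank_eigenspace_of_sq_eq [Nonempty ι] (hA2 : A ^ 2 = c • 1 + μ • of 1)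
    (hAJ : A * of 1 = k • of 1) (hμ : μ ≠ 0) (htr : A.trace = 0) {θ : ℝ} (hθ0 : θ ≠ 0)
    (hθ : θ ^ 2 = c) :
    (finrank ℝ (End.eigenspace A.mulVecLin θ) : ℝ) = (Fintype.card ι - 1 - k / θ) / 2 := by
  have hn : (Fintype.card ι : ℝ) ≠ 0 := by positivity
  have hk := sq_eq_add_mul_card hA2 hAJ
  subst hθ
  -- the coefficient of `of 1` is chosen so that `P` kills the eigenvector `1` of `A`
  have h := finrank_eigenspace_eq_trace (θ := θ)
    (P := (2 * θ)⁻¹ • (A + θ • 1 - ((k + θ) / Fintype.card ι) • of 1 :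
      Matrix ι ι ℝ))
    (by
      rw [Matrix.mul_smul, Matrix.mul_sub, Matrix.mul_add, Matrix.mul_smul, Matrix.mul_smul,
        Matrix.mul_one, hAJ, ← sq, hA2]
      match_scalars
      · ring
      · field_simp
        linear_combination (-1 : ℝ) * hk
      · ring)
    (fun x hx => by
      have hAx : A *ᵥ x = θ • x := End.mem_eigenspace_iff.mp hx
      rw [smul_mulVec, sub_mulVec, add_mulVec, smul_mulVec, smul_mulVec,
        of_one_mulVec_eq_zero hA2 hμ rfl hx, hAx, one_mulVec]
      match_scalars
      field_simp
      ring)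
  rw [h, trace_smul, trace_sub, trace_add, trace_smul, trace_smul, htr, trace_one, trace_of_one]
  simp only [smul_eq_mul]
  field_simp
  ring

end EigenspaceProjection

namespace SimpleGraph

variable {V : Type*} [Fintype V] {G : SimpleGraph V} [DecidableRel G.Adj] {n k μ : ℕ}

theorem IsRegularOfDegree.adjMatrix_mul_of_one {α : Type*} [NonAssocSemiring α]
    (h : G.IsRegularOfDegree k) : G.adjMatrix α * of 1 = (k : α) • of 1 := by
  ext v w
  simp [adjMatrix_mul_apply, h v]

variable [DecidableEq V]

theorem IsSRGWith.adjMatrix_sq {α : Type*} [CommRing α] (h : G.IsSRGWith n k μ μ) :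
    G.adjMatrix α ^ 2 = ((k : α) - μ) • 1 + (μ : α) • of 1 := by
  have hC : Gᶜ.adjMatrix α = of 1 - 1 - G.adjMatrix α := by
    ext i j
    rcases eq_or_ne i j with rfl | hij
    · simp
    · by_cases hG : G.Adj i j <;> simp [hG, hij, one_apply_ne]
  rw [h.matrix_eq, hC]
  simp only [← Nat.cast_smul_eq_nsmul α]
  module

theorem IsSRGWith.finrank_eigenspace_degree [Nonempty V] (h : G.IsSRGWith n k μ μ)
    (hμ : μ ≠ 0) : finrank ℝ (End.eigenspace (G.adjMatrix ℝ).mulVecLin k) = 1 :=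
  finrank_eigenspace_eq_one h.adjMatrix_sq h.regular.adjMatrix_mul_of_one (by exact_mod_cast hμ)

theorem IsSRGWith.finrank_eigenspace_of_sq_eq [Nonempty V] (h : G.IsSRGWith n k μ μ)
    (hμ : μ ≠ 0) {θ : ℝ} (hθ0 : θ ≠ 0) (hθ : θ ^ 2 = k - μ) :
    (finrank ℝ (End.eigenspace (G.adjMatrix ℝ).mulVecLin θ) : ℝ) = (n - 1 - k / θ) / 2 := by
  rw [Matrix.finrank_eigenspace_of_sq_eq h.adjMatrix_sq h.regular.adjMatrix_mul_of_one
    (by exact_mod_cast hμ) (trace_adjMatrix ℝ G) hθ0 hθ, h.card]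

theorem IsSRGWith.finrank_eigenspace_of_four_sq {a : ℕ} (ha : 1 ≤ a)
    (h : G.IsSRGWith (4 * a ^ 2 - 1) (2 * a ^ 2) (a ^ 2) (a ^ 2)) :
    finrank ℝ (End.eigenspace (G.adjMatrix ℝ).mulVecLin (2 * a ^ 2 : ℕ)) = 1 ∧
    finrank ℝ (End.eigenspace (G.adjMatrix ℝ).mulVecLin a) = 2 * a ^ 2 - a - 1 ∧
    finrank ℝ (End.eigenspace (G.adjMatrix ℝ).mulVecLin (-a)) = 2 * a ^ 2 + a - 1 := by
  have ha2 : 1 ≤ a ^ 2 := Nat.one_le_pow _ _ ha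
  have : Nonempty V := Fintype.card_pos_iff.mp (by rw [h.card]; omega)
  have hμ : a ^ 2 ≠ 0 := by positivity
  have ha' : (a : ℝ) ≠ 0 := by positivity
  have hn : ((4 * a ^ 2 - 1 : ℕ) : ℝ) = 4 * a ^ 2 - 1 := by
    rw [Nat.cast_sub (by omega)]; push_cast; ring
  have hθ : (a : ℝ) ^ 2 = (2 * a ^ 2 : ℕ) - (a ^ 2 : ℕ) := by push_cast; ring
  refine ⟨h.finrank_eigenspace_degree hμ, ?_, ?_⟩
  · have e := h.finrank_eigenspace_of_sq_eq hμ ha' hθ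
    rw [hn] at e
    have : finrank ℝ (End.eigenspace (G.adjMatrix ℝ).mulVecLin a) + a + 1 = 2 * a ^ 2 := by
      rw [← Nat.cast_inj (R := ℝ)]
      push_cast [e]
      field_simp
      ring
    omega
  · have e := h.finrank_eigenspace_of_sq_eq hμ (neg_ne_zero.mpr ha') (by rw [neg_sq, hθ])
    rw [hn] at e
    have : finrank ℝ (End.eigenspace (G.adjMatrix ℝ).mulVecLin (-a)) + 1 = 2 * a ^ 2 + a := by
      rw [← Nat.cast_inj (R := ℝ)]
      push_cast [e]
      field_simp
      ring
    omega

end SimpleGraph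

section SymplecticForm

variable {m : ℕ}

lemma sympForm_add_left (x y z : Fin (2 * m) → ZMod 2) :
    sympForm m (x + y) z = sympForm m x z + sympForm m y z := by
  simp only [sympForm, Pi.add_apply, ← Finset.sum_add_distrib]
  exact Finset.sum_congr rfl fun _ _ => by ring

lemma sympForm_smul_left (c : ZMod 2) (x y : Fin (2 * m) → ZMod 2) :
    sympForm m (c • x) y = c * sympForm m x y := by
  simp only [sympForm, Pi.smul_apply, smul_eq_mul, Finset.mul_sum]
  exact Finset.sum_congr rfl fun _ _ => by ring

lemma sympForm_comm (x y : Fin (2 * m) → ZMod 2) : sympForm m x y = sympForm m y x :=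
  Finset.sum_congr rfl fun _ _ => by ring

lemma sympForm_self (x : Fin (2 * m) → ZMod 2) : sympForm m x x = 0 :=
  Finset.sum_eq_zero fun _ _ => by rw [mul_comm]; exact CharTwo.add_self_eq_zero _

def sympBilin (m : ℕ) : LinearMap.BilinForm (ZMod 2) (Fin (2 * m) → ZMod 2) :=
  LinearMap.mk₂ (ZMod 2) (sympForm m) sympForm_add_left sympForm_smul_left
    (fun x y z => by rw [sympForm_comm, sympForm_add_left, sympForm_comm y, sympForm_comm z])
    (fun c x y => by rw [sympForm_comm, sympForm_smul_left, sympForm_comm, smul_eq_mul])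

@[simp] lemma sympBilin_apply (x y : Fin (2 * m) → ZMod 2) : sympBilin m x y = sympForm m x y :=
  rfl

lemma sympForm_single_odd (x : Fin (2 * m) → ZMod 2) (i : Fin m) :
    sympForm m x (Pi.single ⟨2 * i + 1, by omega⟩ 1) = x ⟨2 * i, by omega⟩ := by
  have : ∀ j : Fin m, 2 * (j : ℕ) ≠ 2 * i + 1 := by omega
  simp [sympForm, Pi.single_apply, this, Fin.val_inj]

lemma sympForm_single_even (x : Fin (2 * m) → ZMod 2) (i : Fin m) :
    sympForm m x (Pi.single ⟨2 * i, by omega⟩ 1) = x ⟨2 * i + 1, by omega⟩ := by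
  have : ∀ j : Fin m, 2 * (j : ℕ) + 1 ≠ 2 * i := by omega
  simp [sympForm, Pi.single_apply, this, Fin.val_inj]

end SymplecticForm

section SymplecticCount

variable {m : ℕ}

lemma sympBilin_separatingLeft : (sympBilin m).SeparatingLeft := by
  intro x hx
  ext ⟨j, hj⟩
  obtain ⟨i, rfl | rfl⟩ : ∃ i : Fin m, j = 2 * i ∨ j = 2 * i + 1 :=
    ⟨⟨j / 2, by omega⟩, by rw [Fin.val_mk]; omega⟩
  · simpa [sympForm_single_odd] using hx (Pi.single ⟨2 * i + 1, by omega⟩ 1)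
  · simpa [sympForm_single_even] using hx (Pi.single ⟨2 * i, by omega⟩ 1)

lemma sympBilin_ne_zero {v : Fin (2 * m) → ZMod 2} (hv : v ≠ 0) : sympBilin m v ≠ 0 :=
  fun h => hv (sympBilin_separatingLeft v fun y => by rw [h, LinearMap.zero_apply])

lemma two_mul_card_sympForm_eq_one {v : Fin (2 * m) → ZMod 2} (hv : v ≠ 0) :
    2 * Fintype.card {x // sympForm m v x = 1} = 2 ^ (2 * m) := by
  obtain ⟨a, ha⟩ := DFunLike.ne_iff.mp (sympBilin_ne_zero hv)
  have ha : sympForm m v a = 1 := Fin.eq_one_of_ne_zero _ ha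
  have hsurj : Function.Surjective (sympBilin m v).toAddMonoidHom := fun t =>
    ⟨t • a, by simp [ha]⟩
  simpa using (sympBilin m v).toAddMonoidHom.card_mul_card_fiber_of_surjective hsurj 1

lemma four_mul_card_sympForm_eq_one_and {v w : Fin (2 * m) → ZMod 2} (hv : v ≠ 0) (hw : w ≠ 0)
    (hvw : v ≠ w) :
    4 * Fintype.card {x // sympForm m v x = 1 ∧ sympForm m w x = 1} = 2 ^ (2 * m) := by
  have hφψ : sympBilin m v ≠ sympBilin m w := by
    rw [Ne, ← sub_eq_zero, ← map_sub]
    exact sympBilin_ne_zero (sub_ne_zero.mpr hvw)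
  have hsurj := surjective_prod_of_ne_zmodTwo (sympBilin_ne_zero hv) (sympBilin_ne_zero hw) hφψ
  simpa [Prod.ext_iff] using
    ((sympBilin m v).prod (sympBilin m w)).toAddMonoidHom.card_mul_card_fiber_of_surjective
      hsurj (1, 1)

end SymplecticCount

section SympGraph

variable {m : ℕ}

lemma sympGraph_adj {a b : {x : Fin (2 * m) → ZMod 2 // x ≠ 0}} :
    (sympGraph m).Adj a b ↔ sympForm m a b = 1 := by
  refine ⟨fun ⟨_, h⟩ => h.elim id fun h => by rwa [sympForm_comm],
    fun h => ⟨?_, Or.inl h⟩⟩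
  rintro rfl
  rw [sympForm_self] at h
  exact zero_ne_one h

lemma ne_zero_of_sympForm_eq_one {v x : Fin (2 * m) → ZMod 2} (h : sympForm m v x = 1) :
    x ≠ 0 := by
  rintro rfl
  simp [sympForm] at h

lemma two_mul_degree_sympGraph (v : {x : Fin (2 * m) → ZMod 2 // x ≠ 0}) :
    2 * (sympGraph m).degree v = 2 ^ (2 * m) := by
  rw [← two_mul_card_sympForm_eq_one v.2, ← SimpleGraph.card_neighborSet_eq_degree]
  exact congrArg _ <| Fintype.card_congr <| (Equiv.subtypeEquivRight fun _ => sympGraph_adj).trans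
    (Equiv.subtypeSubtypeEquivSubtype ne_zero_of_sympForm_eq_one)

lemma four_mul_card_commonNeighbors_sympGraph {v w : {x : Fin (2 * m) → ZMod 2 // x ≠ 0}}
    (hvw : v ≠ w) : 4 * Fintype.card ((sympGraph m).commonNeighbors v w) = 2 ^ (2 * m) := by
  rw [← four_mul_card_sympForm_eq_one_and v.2 w.2 (Subtype.coe_ne_coe.mpr hvw)]
  refine congrArg _ <| Fintype.card_congr <| (Equiv.subtypeEquivRight fun _ => ?_).trans
    (Equiv.subtypeSubtypeEquivSubtype fun h => ne_zero_of_sympForm_eq_one h.1)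
  rw [SimpleGraph.mem_commonNeighbors, sympGraph_adj, sympGraph_adj]

theorem sympGraph_isSRGWith (m : ℕ) :
    (sympGraph m).IsSRGWith (2 ^ (2 * m) - 1) (2 ^ (2 * m - 1))
      (2 ^ (2 * m - 2)) (2 ^ (2 * m - 2)) := by
  have pos_of_vertex (v : {x : Fin (2 * m) → ZMod 2 // x ≠ 0}) : 0 < m :=
    Nat.pos_of_ne_zero fun h => v.2 (funext fun i => absurd i.2 (by omega))
  have common {v w} (hvw : v ≠ w) :
      Fintype.card ((sympGraph m).commonNeighbors v w) = 2 ^ (2 * m - 2) := by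
    have h := four_mul_card_commonNeighbors_sympGraph hvw
    have : 2 ^ (2 * m) = 2 ^ 2 * 2 ^ (2 * m - 2) := by
      rw [← pow_add]; have := pos_of_vertex v; congr 1; omega
    omega
  refine ⟨?_, fun v => ?_, fun v w h => common h.ne, fun v w h _ => common h⟩
  · rw [Fintype.card_subtype_compl, Fintype.card_fun, ZMod.card, Fintype.card_fin,
      Fintype.card_unique]
  · have h := two_mul_degree_sympGraph v
    have : 2 ^ (2 * m) = 2 * 2 ^ (2 * m - 1) := by
      rw [← pow_succ']; have := pos_of_vertex v; congr 1; omega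
    omega

end SympGraph

/-- For `m ≥ 2`, the graph on the nonzero vectors of the symplectic space
`(ZMod 2)^(2m)` (adjacent iff non-perpendicular) is strongly regular with parameters
`(2^(2m) − 1, 2^(2m−1), 2^(2m−2), 2^(2m−2))`, and the eigenvalues of its adjacency
matrix over `ℝ` are `2^(2m−1)` with multiplicity `1`, `2^(m−1)` with multiplicity
`2^(2m−1) − 2^(m−1) − 1`, and `−2^(m−1)` with multiplicity `2^(2m−1) + 2^(m−1) − 1`. -/
theorem stmt_15 (m : ℕ) (hm : 2 ≤ m) :
    (sympGraph m).IsSRGWith (2 ^ (2 * m) - 1) (2 ^ (2 * m - 1))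
      (2 ^ (2 * m - 2)) (2 ^ (2 * m - 2)) ∧
    Module.finrank ℝ (Module.End.eigenspace
      (Matrix.mulVecLin ((sympGraph m).adjMatrix ℝ)) ((2 : ℝ) ^ (2 * m - 1))) = 1 ∧
    Module.finrank ℝ (Module.End.eigenspace
      (Matrix.mulVecLin ((sympGraph m).adjMatrix ℝ)) ((2 : ℝ) ^ (m - 1)))
      = 2 ^ (2 * m - 1) - 2 ^ (m - 1) - 1 ∧
    Module.finrank ℝ (Module.End.eigenspace
      (Matrix.mulVecLin ((sympGraph m).adjMatrix ℝ)) (-(2 : ℝ) ^ (m - 1)))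
      = 2 ^ (2 * m - 1) + 2 ^ (m - 1) - 1 := by
  have e4 : 2 ^ (2 * m) = 4 * (2 ^ (m - 1)) ^ 2 := by
    rw [← pow_mul, show 4 = 2 ^ 2 from rfl, ← pow_add]; congr 1; omega
  have e2 : 2 ^ (2 * m - 1) = 2 * (2 ^ (m - 1)) ^ 2 := by
    rw [← pow_mul, ← pow_succ']; congr 1; omega
  have e1 : 2 ^ (2 * m - 2) = (2 ^ (m - 1)) ^ 2 := by
    rw [← pow_mul]; congr 1; omega
  have r2 : (2 : ℝ) ^ (2 * m - 1) = ((2 * (2 ^ (m - 1)) ^ 2 : ℕ) : ℝ) := by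
    rw [← e2]; push_cast; rfl
  have r1 : (2 : ℝ) ^ (m - 1) = ((2 ^ (m - 1) : ℕ) : ℝ) := by push_cast; rfl
  have hsrg := sympGraph_isSRGWith m
  rw [e4, e2, e1] at hsrg ⊢
  rw [r2, r1]
  exact ⟨hsrg, hsrg.finrank_eigenspace_of_four_sq Nat.one_le_two_pow⟩
end

section
/- Fix a natural number m ≥ 1. The number of nonzero vectors x ∈ (ZMod 3)^m satisfying x_1² + x_2² + ⋯ + x_m² = 0 equals 3^{m−1} − 1 if m is odd, and equals 3^{m−1} − 1 + 2·ε·3^{(m−2)/2} if m is even, where ε = (−1)^{m(m+1)/2}. -/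
def Nc (c : ZMod 3) (m : ℕ) : ℕ :=
  (Finset.univ.filter fun x : Fin m → ZMod 3 => ∑ i, x i ^ 2 = c).card

lemma Nc_succ (c : ZMod 3) (m : ℕ) :
    Nc c (m + 1) = Nc c m + 2 * Nc (c - 1) m := by
  have h1 : Nc c (m + 1) =
      ∑ a : ZMod 3, ((Finset.univ.filter fun x : Fin (m+1) → ZMod 3 => ∑ i, x i ^ 2 = c).filter
        fun x => x 0 = a).card :=
    Finset.card_eq_sum_card_fiberwise (fun x _ => Finset.mem_univ _)
  have h2 : ∀ a : ZMod 3,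
      ((Finset.univ.filter fun x : Fin (m+1) → ZMod 3 => ∑ i, x i ^ 2 = c).filter
        fun x => x 0 = a).card = Nc (c - a ^ 2) m := by
    intro a
    apply Finset.card_bij' (fun x _ => Fin.tail x) (fun y _ => Fin.cons a y)
    · intro y hy
      simp only [Finset.mem_filter, Finset.mem_univ, true_and] at hy ⊢
      refine ⟨?_, rfl⟩
      rw [Fin.sum_univ_succ, Fin.cons_zero]
      simp only [Fin.cons_succ]
      rw [hy]; ring
    · intro y hy
      simp only [Finset.mem_filter, Finset.mem_univ, true_and] at hy
      rw [← hy.2]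
      exact Fin.cons_self_tail y
    · intro x _
      simp [Fin.tail_cons]
    · intro x hx
      simp only [Finset.mem_filter, Finset.mem_univ, true_and] at hx ⊢
      rw [Fin.sum_univ_succ, hx.2] at hx
      exact eq_sub_of_add_eq' hx.1
  rw [h1]
  simp only [h2]
  rw [show (Finset.univ : Finset (ZMod 3)) = {0, 1, 2} from by decide]
  rw [show ({0, 1, 2} : Finset (ZMod 3)) = insert 0 (insert 1 {2}) from rfl]
  rw [Finset.sum_insert (by decide), Finset.sum_insert (by decide), Finset.sum_singleton]
  rw [show ((0 : ZMod 3) ^ 2 : ZMod 3) = 0 from by decide,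
    show ((1 : ZMod 3) ^ 2 : ZMod 3) = 1 from by decide,
    show ((2 : ZMod 3) ^ 2 : ZMod 3) = 1 from by decide]
  rw [sub_zero]
  ring

lemma Nc_total (m : ℕ) : Nc 0 m + Nc 1 m + Nc 2 m = 3 ^ m := by
  have h1 : (Finset.univ : Finset (Fin m → ZMod 3)).card =
      ∑ c : ZMod 3, (Finset.univ.filter fun x : Fin m → ZMod 3 => ∑ i, x i ^ 2 = c).card :=
    Finset.card_eq_sum_card_fiberwise (fun x _ => Finset.mem_univ _)
  have h2 : (Finset.univ : Finset (Fin m → ZMod 3)).card = 3 ^ m := by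
    simp [Finset.card_univ]
  rw [h2] at h1
  rw [show (Finset.univ : Finset (ZMod 3)) = insert 0 (insert 1 {2}) from by decide] at h1
  rw [Finset.sum_insert (by decide), Finset.sum_insert (by decide), Finset.sum_singleton] at h1
  unfold Nc
  linarith

lemma Nc_total' (c : ZMod 3) (m : ℕ) :
    Nc c m + Nc (c - 1) m + Nc (c - 1 - 1) m = 3 ^ m := by
  have h := Nc_total m
  have hc : c = 0 ∨ c = 1 ∨ c = 2 := (by decide : ∀ c : ZMod 3, c = 0 ∨ c = 1 ∨ c = 2) c
  rcases hc with rfl | rfl | rfl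
  · rw [show (0 : ZMod 3) - 1 = 2 from by decide, show (2 : ZMod 3) - 1 = 1 from by decide]
    omega
  · rw [show (1 : ZMod 3) - 1 = 0 from by decide, show (0 : ZMod 3) - 1 = 2 from by decide]
    omega
  · rw [show (2 : ZMod 3) - 1 = 1 from by decide, show (1 : ZMod 3) - 1 = 0 from by decide]
    omega

lemma Nc_add_four (c : ZMod 3) (m : ℕ) :
    Nc c (m + 4) = 9 * Nc c m + 24 * 3 ^ m := by
  have e3 : c - 1 - 1 - 1 = c := by
    have : (3 : ZMod 3) = 0 := by decide
    linear_combination -this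
  have h := Nc_total' c m
  simp only [show m + 4 = m + 1 + 1 + 1 + 1 from rfl, Nc_succ, e3]
  ring_nf
  ring_nf at h
  omega

lemma master : ∀ m : ℕ, 1 ≤ m →
    (Odd m → Nc 0 m = 3 ^ (m - 1)) ∧
    (Even m → (Nc 0 m : ℤ) = 3 ^ (m - 1) + 2 * (-1) ^ (m * (m + 1) / 2) * 3 ^ ((m - 2) / 2)) := by
  intro m
  induction m using Nat.strong_induction_on with
  | _ m ih =>
    intro hm
    by_cases h4 : m ≤ 4
    · interval_cases m
      · refine ⟨fun _ => by decide, fun h => absurd h (by decide)⟩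
      · refine ⟨fun h => absurd h (by decide), fun _ => ?_⟩
        rw [show Nc 0 2 = 1 from by decide]
        norm_num
      · refine ⟨fun _ => by decide, fun h => absurd h (by decide)⟩
      · refine ⟨fun h => absurd h (by decide), fun _ => ?_⟩
        rw [show Nc 0 4 = 33 from by decide]
        norm_num
    · obtain ⟨k, rfl⟩ : ∃ k, m = k + 4 := ⟨m - 4, by omega⟩
      have hk1 : 1 ≤ k := by omega
      have ihk := ih k (by omega) hk1
      constructor
      · intro hodd
        have hko : Odd k := by
          rcases hodd with ⟨j, hj⟩; exact ⟨j - 2, by omega⟩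
        rw [Nc_add_four, ihk.1 hko]
        obtain ⟨j, rfl⟩ : ∃ j, k = j + 1 := ⟨k - 1, by omega⟩
        simp only [Nat.add_sub_cancel]
        rw [show j + 1 + 4 - 1 = j + 4 from by omega]
        rw [show j + 4 = j + 1 + 3 from by omega]
        simp [pow_add]
        ring
      · intro heven
        have hke : Even k := by
          rcases heven with ⟨j, hj⟩; exact ⟨j - 2, by omega⟩
        obtain ⟨j, rfl⟩ : ∃ j, k = 2 * j + 2 := by
          rcases hke with ⟨l, hl⟩; exact ⟨l - 1, by omega⟩
        have hcast : ((Nc 0 (2 * j + 2 + 4) : ℕ) : ℤ)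
            = 9 * (Nc 0 (2 * j + 2) : ℤ) + 24 * 3 ^ (2 * j + 2) := by
          rw [Nc_add_four]; push_cast; ring
        rw [hcast, ihk.2 hke]
        rw [show 2 * j + 2 - 1 = 2 * j + 1 from by omega,
          show (2 * j + 2) * (2 * j + 2 + 1) / 2 = (j + 1) * (2 * j + 3) from by
            have : (2 * j + 2) * (2 * j + 2 + 1) = 2 * ((j + 1) * (2 * j + 3)) := by ring
            omega,
          show (2 * j + 2 - 2) / 2 = j from by omega,
          show 2 * j + 2 + 4 - 1 = 2 * j + 5 from by omega,
          show (2 * j + 2 + 4) * (2 * j + 2 + 4 + 1) / 2 = (j + 3) * (2 * j + 7) from by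
            have : (2 * j + 2 + 4) * (2 * j + 2 + 4 + 1) = 2 * ((j + 3) * (2 * j + 7)) := by ring
            omega,
          show (2 * j + 2 + 4 - 2) / 2 = j + 2 from by omega]
        have hE : ((-1 : ℤ)) ^ ((j + 3) * (2 * j + 7)) = (-1) ^ ((j + 1) * (2 * j + 3)) := by
          rw [show (j + 3) * (2 * j + 7) = (j + 1) * (2 * j + 3) + 2 * (4 * j + 9) from by ring,
            pow_add, pow_mul]
          norm_num
        rw [hE]
        ring


/-- The number of nonzero vectors `x ∈ (ZMod 3)^m` with `x_1² + ⋯ + x_m² = 0` is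
`3^(m−1) − 1` when `m` is odd, and `3^(m−1) − 1 + 2 ε 3^((m−2)/2)` when `m` is even,
where `ε = (−1)^(m(m+1)/2)`. -/
theorem stmt_18 (m : ℕ) (hm : 1 ≤ m) :
    (Odd m →
      (Finset.univ.filter
          fun x : Fin m → ZMod 3 => x ≠ 0 ∧ ∑ i, x i ^ 2 = 0).card
        = 3 ^ (m - 1) - 1) ∧
    (Even m →
      ((Finset.univ.filter
          fun x : Fin m → ZMod 3 => x ≠ 0 ∧ ∑ i, x i ^ 2 = 0).card : ℤ)
        = 3 ^ (m - 1) - 1 + 2 * (-1) ^ (m * (m + 1) / 2) * 3 ^ ((m - 2) / 2)) := by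
  have h0 : (0 : Fin m → ZMod 3) ∈
      Finset.univ.filter (fun x : Fin m → ZMod 3 => ∑ i, x i ^ 2 = 0) := by
    simp
  have key : Finset.univ.filter (fun x : Fin m → ZMod 3 => x ≠ 0 ∧ ∑ i, x i ^ 2 = 0)
      = (Finset.univ.filter fun x : Fin m → ZMod 3 => ∑ i, x i ^ 2 = 0).erase 0 := by
    ext x
    simp only [Finset.mem_filter, Finset.mem_univ, true_and, Finset.mem_erase]
  have hcard : (Finset.univ.filter
      (fun x : Fin m → ZMod 3 => x ≠ 0 ∧ ∑ i, x i ^ 2 = 0)).card = Nc 0 m - 1 := by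
    rw [key, Finset.card_erase_of_mem h0]; rfl
  have hpos : 1 ≤ Nc 0 m := Finset.card_pos.mpr ⟨0, h0⟩
  have hmaster := master m hm
  constructor
  · intro h
    rw [hcard, hmaster.1 h]
  · intro h
    rw [hcard, Nat.cast_sub hpos, hmaster.2 h]
    push_cast
    ring
end
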